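/- Let Y be the number of isolated vertices of the Erdős–Rényi random graph G(n,p) with n ≥ 2 and p ∈ (0,1), with mean μ = n(1−p)^{n−1}, and let m(θ) = E(e^{θY}). Then for all θ < 0, m'(θ) ≥ μ (1 + 2θ) m(θ). -/

import Mathlib

/-!
Write `Y` for the number of isolated vertices and `Y_v` for the same count after deleting the
edges at `v`. If `v` is isolated then `Y_v = Y`, so `Y e^{θY} = ∑_v 1(d(v) = 0) e^{θ Y_v}`. The
event `d(v) = 0` depends only on the `n - 1` edges at `v` and `Y_v` only on the other edges, so
by independence `m'(θ) = (1 - p)^{n-1} ∑_v E e^{θ Y_v}`.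

Deleting the edges at `v` can newly isolate only `v` and the `N_v` neighbours of `v` of degree
one, so `Y_v ≤ Y + 1 + N_v`, and `∑_v N_v ≤ n` because a vertex of degree one is the leaf
neighbour of exactly one vertex. For `θ < 0`, `e^{θ Y_v} ≥ e^{θY} (1 + θ (1 + N_v))`, and summing over `v`
gives `∑_v e^{θ Y_v} ≥ n (1 + 2θ) e^{θY}`.
-/

open MeasureTheory ProbabilityTheory Real Finset

noncomputable section

namespace ErdosRenyiIsolated

/-- Index set for the potential edges of a graph on `Fin n`. -/
abbrev EdgeIdx (n : ℕ) := {e : Fin n × Fin n // e.1 < e.2}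

/-- Adjacency relation of the random graph encoded by `ω` : `u` and `v` are adjacent
if the corresponding edge indicator is `true`. -/
def adj {n : ℕ} (ω : EdgeIdx n → Bool) (u v : Fin n) : Prop :=
  if h : u < v then ω ⟨(u, v), h⟩ = true
  else if h' : v < u then ω ⟨(v, u), h'⟩ = true
  else False

instance {n : ℕ} (ω : EdgeIdx n → Bool) (u v : Fin n) : Decidable (adj ω u v) := by
  unfold adj
  split
  · exact inferInstance
  · split
    · exact inferInstance
    · exact inferInstance

/-- Degree of vertex `v` in the graph encoded by `ω`. -/
def deg {n : ℕ} (ω : EdgeIdx n → Bool) (v : Fin n) : ℕ :=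
  (Finset.univ.filter fun w => adj ω v w).card

/-- The number of isolated vertices of the graph encoded by `ω`. -/
def isolCount {n : ℕ} (ω : EdgeIdx n → Bool) : ℕ :=
  (Finset.univ.filter fun v => deg ω v = 0).card

/-- The Bernoulli(p) measure on `Bool`. -/
def bern (p : ℝ) : Measure Bool :=
  ENNReal.ofReal p • Measure.dirac true + ENNReal.ofReal (1 - p) • Measure.dirac false

instance (p : ℝ) : IsFiniteMeasure (bern p) := by
  constructor
  have h : bern p Set.univ ≤ ENNReal.ofReal p + ENNReal.ofReal (1 - p) := by
    simp [bern]
  exact lt_of_le_of_lt h (ENNReal.add_lt_top.mpr ⟨ENNReal.ofReal_lt_top, ENNReal.ofReal_lt_top⟩)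

/-- The Erdős–Rényi random graph measure `G(n,p)`: the edge indicators are i.i.d.
Bernoulli(p). -/
def gnp (n : ℕ) (p : ℝ) : Measure (EdgeIdx n → Bool) :=
  Measure.pi fun _ => bern p

/-- The Erdős–Rényi measure together with an independent uniformly chosen vertex. -/
def gnpV (n : ℕ) (p : ℝ) : Measure ((EdgeIdx n → Bool) × Fin n) :=
  (gnp n p).prod (uniformOn (Set.univ : Set (Fin n)))

/-- Adjacency in the graph obtained by deleting all edges incident to `v'`. -/
def adjDel {n : ℕ} (ω : EdgeIdx n → Bool) (v' u v : Fin n) : Prop :=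
  adj ω u v ∧ u ≠ v' ∧ v ≠ v'

instance {n : ℕ} (ω : EdgeIdx n → Bool) (v' u v : Fin n) : Decidable (adjDel ω v' u v) := by
  unfold adjDel; exact inferInstance

/-- Degree of `v` in the graph `ω` with all edges incident to `v'` deleted. -/
def degDel {n : ℕ} (ω : EdgeIdx n → Bool) (v' v : Fin n) : ℕ :=
  (Finset.univ.filter fun w => adjDel ω v' v w).card

/-- Number of isolated vertices in the graph `ω` with all edges incident to `v'` deleted. -/
def isolCountDel {n : ℕ} (ω : EdgeIdx n → Bool) (v' : Fin n) : ℕ :=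
  (Finset.univ.filter fun v => degDel ω v' v = 0).card

end ErdosRenyiIsolated

theorem MeasureTheory.integral_pi_mul_subtype {ι : Type*} [Fintype ι] {α : ι → Type*}
    [∀ i, MeasurableSpace (α i)] (μ : ∀ i, Measure (α i)) [∀ i, SigmaFinite (μ i)]
    (p : ι → Prop) [DecidablePred p] (f : (∀ i : Subtype p, α i) → ℝ)
    (g : (∀ i : {i // ¬ p i}, α i) → ℝ) :
    ∫ x, f (fun i => x i) * g (fun i => x i) ∂Measure.pi μ =
      (∫ a, f a ∂Measure.pi fun i : Subtype p => μ i) *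
        ∫ b, g b ∂Measure.pi fun i : {i // ¬ p i} => μ i := by
  rw [← integral_prod_mul, ← (measurePreserving_piEquivPiSubtypeProd μ p).integral_comp']
  rfl

theorem ProbabilityTheory.deriv_mgf_of_finite {Ω : Type*} [MeasurableSpace Ω] [Finite Ω]
    [MeasurableSingletonClass Ω] {μ : Measure Ω} [IsFiniteMeasure μ] (X : Ω → ℝ) (t : ℝ) :
    deriv (mgf X μ) t = μ[fun ω => X ω * exp (t * X ω)] := by
  have h : integrableExpSet X μ = Set.univ := Set.eq_univ_of_forall fun _ => .of_finite
  exact deriv_mgf (by simp [h])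

namespace ErdosRenyiIsolated

section Bernoulli

variable {p : ℝ}

lemma isProbabilityMeasure_bern (hp : p ∈ Set.Icc (0 : ℝ) 1) : IsProbabilityMeasure (bern p) := by
  constructor
  rw [bern, Measure.add_apply, Measure.smul_apply, Measure.smul_apply, measure_univ,
    measure_univ, smul_eq_mul, smul_eq_mul, mul_one, mul_one,
    ← ENNReal.ofReal_add hp.1 (by linarith [hp.2]), add_sub_cancel, ENNReal.ofReal_one]

lemma isProbabilityMeasure_gnp {n : ℕ} (hp : p ∈ Set.Icc (0 : ℝ) 1) :
    IsProbabilityMeasure (gnp n p) := by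
  have := isProbabilityMeasure_bern hp
  unfold gnp
  infer_instance

lemma measureReal_bern_false (hp : p ≤ 1) : (bern p).real {false} = 1 - p := by
  simp [bern, Measure.real, ENNReal.toReal_ofReal (sub_nonneg.mpr hp)]

end Bernoulli

section Graph

variable {n : ℕ} (ω : EdgeIdx n → Bool)

lemma adj_comm (u v : Fin n) : adj ω u v ↔ adj ω v u := by
  unfold adj
  rcases lt_trichotomy u v with h | rfl | h
  · rw [dif_pos h, dif_neg (asymm h), dif_pos h]
  · rfl
  · rw [dif_neg (asymm h), dif_pos h, dif_pos h]

lemma adj_fst_snd (e : EdgeIdx n) : adj ω e.1.1 e.1.2 ↔ ω e = true := by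
  simp [adj, e.2]

lemma deg_eq_zero_iff (v : Fin n) : deg ω v = 0 ↔ ∀ w, ¬ adj ω v w := by
  simp [deg, Finset.filter_eq_empty_iff]

variable {ω}

lemma not_adj_self (v : Fin n) : ¬ adj ω v v := by
  simp [adj]

def Incident (v : Fin n) (e : EdgeIdx n) : Prop := e.1.1 = v ∨ e.1.2 = v

instance (v : Fin n) : DecidablePred (Incident v) := fun _ => by
  unfold Incident
  infer_instance

lemma deg_eq_zero_iff_forall_incident (v : Fin n) :
    deg ω v = 0 ↔ ∀ e, Incident v e → ω e = false := by
  rw [deg_eq_zero_iff]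
  constructor
  · rintro h e (rfl | rfl) <;> by_contra he <;> rw [Bool.not_eq_false, ← adj_fst_snd] at he
    · exact h _ he
    · exact h _ ((adj_comm ω _ _).mp he)
  · intro h w hvw
    rcases lt_trichotomy v w with hlt | rfl | hlt
    · have := (adj_fst_snd ω ⟨(v, w), hlt⟩).mp hvw
      rw [h ⟨(v, w), hlt⟩ (Or.inl rfl)] at this
      exact Bool.false_ne_true this
    · exact not_adj_self v hvw
    · have := (adj_fst_snd ω ⟨(w, v), hlt⟩).mp ((adj_comm ω v w).mp hvw)
      rw [h ⟨(w, v), hlt⟩ (Or.inr rfl)] at this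
      exact Bool.false_ne_true this

lemma adj_congr {ω' : EdgeIdx n → Bool} {v u w : Fin n}
    (h : ∀ e, ¬ Incident v e → ω e = ω' e) (hu : u ≠ v) (hw : w ≠ v) :
    adj ω u w ↔ adj ω' u w := by
  unfold adj
  split_ifs with h₁ h₂
  · rw [h _ (not_or.mpr ⟨hu, hw⟩)]
  · rw [h _ (not_or.mpr ⟨hw, hu⟩)]
  · rfl

lemma isolCountDel_congr {ω' : EdgeIdx n → Bool} {v : Fin n}
    (h : ∀ e, ¬ Incident v e → ω e = ω' e) : isolCountDel ω v = isolCountDel ω' v := by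
  have : ∀ u w, adjDel ω v u w ↔ adjDel ω' v u w := fun u w =>
    and_congr_left fun ⟨hu, hw⟩ => adj_congr h hu hw
  unfold isolCountDel degDel
  congr 1
  refine Finset.filter_congr fun u _ => ?_
  rw [Finset.filter_congr fun w _ => this u w]

def incidentEquiv (v : Fin n) : {e : EdgeIdx n // Incident v e} ≃ {u : Fin n // u ≠ v} where
  toFun e := if h : e.1.1.1 = v then ⟨e.1.1.2, fun hb => e.1.2.ne (h.trans hb.symm)⟩
    else ⟨e.1.1.1, h⟩
  invFun u := if h : u.1 < v then ⟨⟨(u, v), h⟩, Or.inr rfl⟩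
    else ⟨⟨(v, u), (not_lt.mp h).lt_of_ne' u.2⟩, Or.inl rfl⟩
  left_inv := by
    rintro ⟨⟨⟨a, b⟩, hab⟩, rfl | rfl⟩ <;> simp [hab, hab.ne, not_lt.mpr hab.le]
  right_inv u := by
    by_cases h : u.1 < v
    · simp [h, h.ne]
    · simp [h]

lemma card_incident (v : Fin n) : Fintype.card {e : EdgeIdx n // Incident v e} = n - 1 := by
  simp [Fintype.card_congr (incidentEquiv v), Fintype.card_subtype_compl]

variable (ω)

lemma filter_adjDel_of_ne {v u : Fin n} (hu : u ≠ v) :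
    ({w | adjDel ω v u w} : Finset (Fin n)) = ({w | adj ω u w} : Finset (Fin n)).erase v := by
  ext w
  simp [adjDel, hu, and_comm]

lemma degDel_self (v : Fin n) : degDel ω v v = 0 := by
  simp [degDel, adjDel]

lemma isolCountDel_eq_of_deg_eq_zero {v : Fin n} (h : deg ω v = 0) :
    isolCountDel ω v = isolCount ω := by
  unfold isolCountDel isolCount
  congr 1
  refine Finset.filter_congr fun u _ => ?_
  rcases eq_or_ne u v with rfl | hu
  · simp [degDel_self, h]
  · rw [degDel, filter_adjDel_of_ne ω hu, Finset.erase_eq_of_notMem, deg]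
    simpa [adj_comm ω u] using (deg_eq_zero_iff ω v).mp h u

def leafNbrCount (v : Fin n) : ℕ := #{w | adj ω v w ∧ deg ω w = 1}

lemma isolCountDel_le (v : Fin n) : isolCountDel ω v ≤ isolCount ω + 1 + leafNbrCount ω v := by
  have hsub : ({u | degDel ω v u = 0} : Finset (Fin n)) ⊆
      insert v (({u | deg ω u = 0} : Finset (Fin n)) ∪
        ({w | adj ω v w ∧ deg ω w = 1} : Finset (Fin n))) := by
    intro u hu
    rcases eq_or_ne u v with rfl | huv
    · exact mem_insert_self _ _
    rw [mem_filter, degDel, card_eq_zero, filter_adjDel_of_ne ω huv, erase_eq_empty_iff] at hu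
    simp only [mem_insert, mem_union, mem_filter, mem_univ, true_and, huv, false_or]
    rcases hu.2 with h | h
    · exact .inl (by rw [deg, h, card_empty])
    · refine .inr ⟨(adj_comm ω u v).mp ?_, by rw [deg, h, card_singleton]⟩
      simpa using h.ge (mem_singleton_self v)
  calc isolCountDel ω v ≤ _ := card_le_card hsub
    _ ≤ _ := card_insert_le _ _
    _ ≤ isolCount ω + 1 + leafNbrCount ω v := by
      rw [add_right_comm]
      exact Nat.add_le_add_right (card_union_le _ _) 1

lemma sum_leafNbrCount_le : ∑ v, leafNbrCount ω v ≤ n := by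
  have hw : ∀ w, #{v | adj ω v w ∧ deg ω w = 1} ≤ 1 := by
    intro w
    by_cases h : deg ω w = 1
    · simp_rw [h, and_true, adj_comm ω _ w]
      exact h.le
    · simp [h]
  calc ∑ v, leafNbrCount ω v = ∑ w, #{v | adj ω v w ∧ deg ω w = 1} :=
        sum_card_bipartiteAbove_eq_sum_card_bipartiteBelow _
    _ ≤ ∑ _w : Fin n, 1 := sum_le_sum fun w _ => hw w
    _ = n := by simp

lemma isolCount_mul_eq_sum (φ : ℕ → ℝ) :
    isolCount ω * φ (isolCount ω) = ∑ v, if deg ω v = 0 then φ (isolCountDel ω v) else 0 := by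
  rw [← sum_filter, sum_congr rfl fun v hv => by
    rw [isolCountDel_eq_of_deg_eq_zero ω (mem_filter.mp hv).2], sum_const, nsmul_eq_mul]
  rfl

lemma mul_exp_le_sum_exp_isolCountDel {θ : ℝ} (hθ : θ ≤ 0) :
    n * (1 + 2 * θ) * exp (θ * isolCount ω) ≤ ∑ v, exp (θ * isolCountDel ω v) := by
  have hv : ∀ v, exp (θ * isolCount ω) * (1 + θ * (1 + leafNbrCount ω v)) ≤
      exp (θ * isolCountDel ω v) := by
    intro v
    have hle : (isolCountDel ω v : ℝ) ≤ isolCount ω + (1 + leafNbrCount ω v) := by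
      exact_mod_cast (isolCountDel_le ω v).trans_eq (add_assoc _ _ _)
    calc exp (θ * isolCount ω) * (1 + θ * (1 + leafNbrCount ω v))
        ≤ exp (θ * isolCount ω) * exp (θ * (1 + leafNbrCount ω v)) := by
          gcongr
          linarith [add_one_le_exp (θ * (1 + leafNbrCount ω v))]
      _ = exp (θ * (isolCount ω + (1 + leafNbrCount ω v))) := by rw [← exp_add, ← mul_add]
      _ ≤ exp (θ * isolCountDel ω v) := exp_le_exp.mpr (mul_le_mul_of_nonpos_left hle hθ)
  have hsum : (n : ℝ) * θ ≤ θ * ∑ v, (leafNbrCount ω v : ℝ) := by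
    rw [mul_comm]
    exact mul_le_mul_of_nonpos_left (by exact_mod_cast sum_leafNbrCount_le ω) hθ
  calc n * (1 + 2 * θ) * exp (θ * isolCount ω)
      = exp (θ * isolCount ω) * (n * (1 + θ) + n * θ) := by ring
    _ ≤ exp (θ * isolCount ω) * (n * (1 + θ) + θ * ∑ v, (leafNbrCount ω v : ℝ)) := by gcongr
    _ = ∑ v, exp (θ * isolCount ω) * (1 + θ * (1 + leafNbrCount ω v)) := by
      rw [← mul_sum]
      simp only [mul_add, mul_one, mul_sum, sum_add_distrib, sum_const, card_univ,
        Fintype.card_fin, nsmul_eq_mul]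
      ring
    _ ≤ _ := sum_le_sum fun v _ => hv v

end Graph

lemma integral_ite_deg_eq_zero {n : ℕ} {p : ℝ} (hp : p ∈ Set.Icc (0 : ℝ) 1) (v : Fin n)
    (φ : ℕ → ℝ) :
    ∫ ω, (if deg ω v = 0 then φ (isolCountDel ω v) else 0) ∂gnp n p =
      (1 - p) ^ (n - 1) * ∫ ω, φ (isolCountDel ω v) ∂gnp n p := by
  have := isProbabilityMeasure_bern hp
  let glue (b : {e // ¬ Incident v e} → Bool) : EdgeIdx n → Bool :=
    (Equiv.piEquivPiSubtypeProd (Incident v) _).symm (fun _ => false, b)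
  have hglue (ω : EdgeIdx n → Bool) : isolCountDel (glue fun e => ω e) v = isolCountDel ω v :=
    isolCountDel_congr fun e he => by simp [glue, Equiv.piEquivPiSubtypeProd_symm_apply, he]
  let g (b : {e // ¬ Incident v e} → Bool) : ℝ := φ (isolCountDel (glue b) v)
  let isolated : ({e // Incident v e} → Bool) → ℝ := Set.indicator {fun _ => false} 1
  have hisolated : ∫ a, isolated a ∂Measure.pi (fun _ => bern p) = (1 - p) ^ (n - 1) := by
    rw [integral_indicator_one (measurableSet_singleton _), Measure.real, Measure.pi_singleton,
      ENNReal.toReal_prod, prod_const, card_univ, card_incident]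
    exact congrArg (· ^ (n - 1)) (measureReal_bern_false hp.2)
  have hisolated_restrict (ω : EdgeIdx n → Bool) :
      isolated (fun e => ω e) = if deg ω v = 0 then 1 else 0 := by
    simp only [isolated, Set.indicator_apply, Set.mem_singleton_iff, funext_iff, Subtype.forall,
      deg_eq_zero_iff_forall_incident, Pi.one_apply]
  calc ∫ ω, (if deg ω v = 0 then φ (isolCountDel ω v) else 0) ∂gnp n p
      = ∫ ω, isolated (fun e => ω e) * g (fun e => ω e) ∂gnp n p := by
        simp only [hisolated_restrict, ite_mul, one_mul, zero_mul, g, hglue]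
    _ = (1 - p) ^ (n - 1) * ∫ b, g b ∂Measure.pi fun _ => bern p := by
        rw [gnp, integral_pi_mul_subtype, hisolated]
    _ = (1 - p) ^ (n - 1) * ∫ ω, φ (isolCountDel ω v) ∂gnp n p := by
        congr 1
        simpa [gnp, g, hglue] using
          (integral_pi_mul_subtype (fun _ => bern p) (Incident v) (fun _ => 1) g).symm

theorem deriv_mgf_bound_neg_general (n : ℕ) (p : ℝ)
    (hp : p ∈ Set.Ioo (0 : ℝ) 1)
    (μ : ℝ) (hμ : μ = (n : ℝ) * (1 - p) ^ (n - 1))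
    (m : ℝ → ℝ) (hm : ∀ θ, m θ = ∫ ω, Real.exp (θ * (isolCount ω : ℝ)) ∂(gnp n p)) :
    ∀ θ : ℝ, θ < 0 → μ * (1 + 2 * θ) * m θ ≤ deriv m θ := by
  intro θ hθ
  have hp' : p ∈ Set.Icc (0 : ℝ) 1 := Set.Ioo_subset_Icc_self hp
  have := isProbabilityMeasure_gnp (n := n) hp'
  have hm_mgf : m = mgf (fun ω => (isolCount ω : ℝ)) (gnp n p) := funext hm
  calc μ * (1 + 2 * θ) * m θ
      = (1 - p) ^ (n - 1) * ∫ ω, n * (1 + 2 * θ) * exp (θ * isolCount ω) ∂gnp n p := by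
        rw [hm, hμ, integral_const_mul]
        ring
    _ ≤ (1 - p) ^ (n - 1) * ∫ ω, ∑ v, exp (θ * isolCountDel ω v) ∂gnp n p := by
        refine mul_le_mul_of_nonneg_left ?_ (pow_nonneg (sub_nonneg.mpr hp'.2) _)
        exact integral_mono .of_finite .of_finite fun ω =>
          mul_exp_le_sum_exp_isolCountDel ω hθ.le
    _ = ∫ ω, ∑ v, (if deg ω v = 0 then exp (θ * isolCountDel ω v) else 0) ∂gnp n p := by
        rw [integral_finsetSum _ fun _ _ => .of_finite, integral_finsetSum _ fun _ _ => .of_finite,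
          mul_sum]
        exact sum_congr rfl fun v _ => (integral_ite_deg_eq_zero hp' v fun k => exp (θ * k)).symm
    _ = ∫ ω, isolCount ω * exp (θ * isolCount ω) ∂gnp n p := by
        simp only [isolCount_mul_eq_sum _ fun k => exp (θ * k)]
    _ = deriv m θ := by
        rw [hm_mgf, deriv_mgf_of_finite]

/-- differential inequality for the mgf `m(θ) = E e^{θY}`, `θ < 0`. -/
theorem deriv_mgf_bound_neg (n : ℕ) (hn : 2 ≤ n) (p : ℝ)
    (hp : p ∈ Set.Ioo (0 : ℝ) 1)
    (μ : ℝ) (hμ : μ = (n : ℝ) * (1 - p) ^ (n - 1))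
    (m : ℝ → ℝ) (hm : ∀ θ, m θ = ∫ ω, Real.exp (θ * (isolCount ω : ℝ)) ∂(gnp n p)) :
    ∀ θ : ℝ, θ < 0 → μ * (1 + 2 * θ) * m θ ≤ deriv m θ :=
  deriv_mgf_bound_neg_general n p hp μ hμ m hm

end ErdosRenyiIsolated
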